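/- arXiv:1301.0710 — 4 statements merged into one kernel-verified Lean document; each statement's English description precedes it below -/
import Mathlib

section
/- Let g : [0,∞) → [0,∞) be a decreasing, right-continuous function. Suppose there exist α > 0 and B > 0 such that t · g(s+t) ≤ B · g(s)^{1+α} for every s, t ≥ 0. Then g(s) = 0 for all s ≥ s∞, where s∞ := 2B · g(0)^α / (1 − 2^{−α}). -/
/-!
Put `r = 2 ^ (-α)` and `C = 2 B g(0)^α`. If `g(s) ≤ M`, the iteration inequality with
`t = 2 B M^α` gives `g(s + t) ≤ M / 2`. Starting from `M = g(0)` and halving repeatedly, the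
step lengths are `C r^k`, so `g ≤ g(0) 2^{-k}` beyond `C (1 + r + ⋯ + r^{k-1}) < C / (1 - r)`
for every `k`, and `g` vanishes from `C / (1 - r)` on.
-/

open Real Finset Filter Topology

section Iteration

variable {g : ℝ → ℝ} {α B : ℝ}

lemma iter_le_half (hα : 0 ≤ α) (hB : 0 < B)
    (hiter : ∀ s t, 0 ≤ s → 0 ≤ t → t * g (s + t) ≤ B * g s ^ (1 + α))
    {s M : ℝ} (hs : 0 ≤ s) (hgs : 0 ≤ g s) (hgM : g s ≤ M) (hM : 0 < M) :
    g (s + 2 * B * M ^ α) ≤ M / 2 := by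
  have ht : 0 < 2 * B * M ^ α := by positivity
  refine le_of_mul_le_mul_left ?_ ht
  calc 2 * B * M ^ α * g (s + 2 * B * M ^ α)
      ≤ B * g s ^ (1 + α) := hiter s _ hs ht.le
    _ ≤ B * M ^ (1 + α) := by gcongr
    _ = 2 * B * M ^ α * (M / 2) := by rw [rpow_add hM, rpow_one]; ring

lemma rpow_inv_two_pow_mul {M : ℝ} (hM : 0 ≤ M) (α : ℝ) (k : ℕ) :
    (M * 2⁻¹ ^ k) ^ α = M ^ α * (2 ^ (-α)) ^ k := by
  rw [mul_rpow hM (by positivity), ← rpow_pow_comm (by norm_num), inv_rpow zero_le_two,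
    ← rpow_neg zero_le_two]

lemma iter_le_geometric (hα : 0 ≤ α) (hB : 0 < B)
    (hg_nonneg : ∀ s, 0 ≤ s → 0 ≤ g s)
    (hiter : ∀ s t, 0 ≤ s → 0 ≤ t → t * g (s + t) ≤ B * g s ^ (1 + α))
    (hg0 : 0 < g 0) (k : ℕ) :
    g (∑ i ∈ range k, 2 * B * g 0 ^ α * (2 ^ (-α)) ^ i) ≤ g 0 * 2⁻¹ ^ k := by
  induction k with
  | zero => simp
  | succ k ih =>
    have hsk : 0 ≤ ∑ i ∈ range k, 2 * B * g 0 ^ α * (2 ^ (-α)) ^ i :=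
      sum_nonneg fun i _ => by positivity
    have step := iter_le_half hα hB hiter hsk (hg_nonneg _ hsk) ih (by positivity)
    rw [rpow_inv_two_pow_mul hg0.le] at step
    rw [sum_range_succ, pow_succ]
    convert step using 2 <;> ring

end Iteration

lemma one_sub_two_rpow_neg_pos {α : ℝ} (hα : 0 < α) : 0 < 1 - (2 : ℝ) ^ (-α) :=
  sub_pos.2 (rpow_lt_one_of_one_lt_of_neg one_lt_two (neg_neg_of_pos hα))

theorem stmt0_general (g : ℝ → ℝ) (α B : ℝ) (hα : 0 < α) (hB : 0 < B)
    (hg_nonneg : ∀ s, 0 ≤ s → 0 ≤ g s)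
    (hg_mono : ∀ s t, 0 ≤ s → s ≤ t → g t ≤ g s)
    (hiter : ∀ s t, 0 ≤ s → 0 ≤ t → t * g (s + t) ≤ B * g s ^ (1 + α)) :
    ∀ s, 2 * B * g 0 ^ α / (1 - 2 ^ (-α)) ≤ s → g s = 0 := by
  intro s hs
  have hg0_nonneg := hg_nonneg 0 le_rfl
  have hr := one_sub_two_rpow_neg_pos hα
  have hs0 : 0 ≤ s := (div_nonneg (by positivity) hr.le).trans hs
  refine le_antisymm ?_ (hg_nonneg s hs0)
  obtain hg0 | hg0 := hg0_nonneg.eq_or_lt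
  · exact hg0 ▸ hg_mono 0 s le_rfl hs0
  have bound (k : ℕ) : g s ≤ g 0 * 2⁻¹ ^ k := by
    refine (hg_mono _ s (sum_nonneg fun i _ => by positivity) ?_).trans
      (iter_le_geometric hα.le hB hg_nonneg hiter hg0 k)
    rw [← mul_sum]
    calc 2 * B * g 0 ^ α * ∑ i ∈ range k, (2 ^ (-α)) ^ i
        ≤ 2 * B * g 0 ^ α * ((2 ^ (-α)) ^ 0 / (1 - 2 ^ (-α))) := by
          gcongr
          rw [range_eq_Ico]
          exact geom_sum_Ico_le_of_lt_one (by positivity) (by linarith)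
      _ = 2 * B * g 0 ^ α / (1 - 2 ^ (-α)) := by ring
      _ ≤ s := hs
  have hlim : Tendsto (fun k : ℕ => g 0 * 2⁻¹ ^ k) atTop (𝓝 0) := by
    simpa using (tendsto_pow_atTop_nhds_zero_of_lt_one (by norm_num)
      (by norm_num : (2⁻¹ : ℝ) < 1)).const_mul (g 0)
  exact ge_of_tendsto' hlim bound

/-- De Giorgi-type iteration lemma: if `g : [0,∞) → [0,∞)` is decreasing, right-continuous
and satisfies `t * g (s+t) ≤ B * g s ^ (1+α)` for all `s, t ≥ 0`, then `g` vanishes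
for `s ≥ s∞ := 2 * B * g 0 ^ α / (1 - 2 ^ (-α))`. -/
theorem stmt0 (g : ℝ → ℝ) (α B : ℝ) (hα : 0 < α) (hB : 0 < B)
    (hg_nonneg : ∀ s, 0 ≤ s → 0 ≤ g s)
    (hg_mono : ∀ s t, 0 ≤ s → s ≤ t → g t ≤ g s)
    (hg_rc : ∀ s, 0 ≤ s → ContinuousWithinAt g (Set.Ici s) s)
    (hiter : ∀ s t, 0 ≤ s → 0 ≤ t → t * g (s + t) ≤ B * g s ^ (1 + α)) :
    ∀ s, 2 * B * g 0 ^ α / (1 - 2 ^ (-α)) ≤ s → g s = 0 :=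
  stmt0_general g α B hα hB hg_nonneg hg_mono hiter
end

section
/- Under the hypotheses of the De Giorgi-type iteration lemma (g decreasing, right-continuous, t·g(s+t) ≤ B·g(s)^{1+α} for all s,t ≥ 0 with α, B > 0), the sequence defined by s₀ = 0 and s_{j+1} = s_j + 2B·g(s_j)^α satisfies g(s_j) ≤ g(0)/2^j for all j, hence g(s_j) → 0. -/
open Filter

/-!
Choosing `t = 2 B g(s)^α` in `t · g(s + t) ≤ B g(s)^{1+α} = B g(s)^α · g(s)` gives
`g(s + t) ≤ g(s) / 2` (trivially so when `g(s) = 0`, since then `t = 0`).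
Each step of the iteration therefore halves `g`, and `g(s_j) ≤ g(0) / 2^j → 0`.
-/

theorem apply_add_le_half_of_mul_le {g : ℝ → ℝ} {α B s : ℝ} (hα : 0 < α) (hB : 0 < B)
    (hgs : 0 ≤ g s)
    (hiter : 2 * B * g s ^ α * g (s + 2 * B * g s ^ α) ≤ B * g s ^ (1 + α)) :
    g (s + 2 * B * g s ^ α) ≤ g s / 2 := by
  rcases hgs.eq_or_lt with hzero | hpos
  · simp [← hzero, Real.zero_rpow hα.ne']
  · rw [Real.rpow_add hpos, Real.rpow_one] at hiter
    have hBpow : 0 < B * g s ^ α := by positivity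
    nlinarith

theorem le_div_two_pow_of_le_half {u : ℕ → ℝ} (hu : ∀ j, u (j + 1) ≤ u j / 2) (j : ℕ) :
    u j ≤ u 0 / 2 ^ j := by
  induction j with
  | zero => simp
  | succ j ih =>
    calc u (j + 1) ≤ u j / 2 := hu j
      _ ≤ u 0 / 2 ^ j / 2 := by gcongr
      _ = u 0 / 2 ^ (j + 1) := by rw [pow_succ, div_div]

theorem stmt1_general (g : ℝ → ℝ) (α B : ℝ) (hα : 0 < α) (hB : 0 < B)
    (hg_nonneg : ∀ s, 0 ≤ s → 0 ≤ g s)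
    (hiter : ∀ s t, 0 ≤ s → 0 ≤ t → t * g (s + t) ≤ B * g s ^ (1 + α))
    (s : ℕ → ℝ) (hs0 : s 0 = 0)
    (hsrec : ∀ j, s (j + 1) = s j + 2 * B * g (s j) ^ α) :
    (∀ j, g (s j) ≤ g 0 / 2 ^ j) ∧
      Tendsto (fun j => g (s j)) atTop (nhds 0) := by
  have hstep_nonneg (j : ℕ) (hj : 0 ≤ s j) : 0 ≤ 2 * B * g (s j) ^ α := by
    have := Real.rpow_nonneg (hg_nonneg _ hj) α
    positivity
  have hs_nonneg (j : ℕ) : 0 ≤ s j := by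
    induction j with
    | zero => exact hs0.ge
    | succ j ih => rw [hsrec]; linarith [hstep_nonneg j ih]
  have hhalf (j : ℕ) : g (s (j + 1)) ≤ g (s j) / 2 := by
    rw [hsrec]
    exact apply_add_le_half_of_mul_le hα hB (hg_nonneg _ (hs_nonneg j))
      (hiter _ _ (hs_nonneg j) (hstep_nonneg j (hs_nonneg j)))
  have hbound (j : ℕ) : g (s j) ≤ g 0 / 2 ^ j := by
    simpa [hs0] using le_div_two_pow_of_le_half (u := fun j => g (s j)) hhalf j
  have hgeom : Tendsto (fun j : ℕ => g 0 / 2 ^ j) atTop (nhds 0) :=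
    tendsto_const_nhds.div_atTop (tendsto_pow_atTop_atTop_of_one_lt one_lt_two)
  exact ⟨hbound, squeeze_zero (fun j => hg_nonneg _ (hs_nonneg j)) hbound hgeom⟩

/-- Under the hypotheses of the De Giorgi-type iteration lemma, the sequence
`s 0 = 0`, `s (j+1) = s j + 2 * B * g (s j) ^ α` satisfies `g (s j) ≤ g 0 / 2 ^ j`,
hence `g (s j) → 0`. -/
theorem stmt1 (g : ℝ → ℝ) (α B : ℝ) (hα : 0 < α) (hB : 0 < B)
    (hg_nonneg : ∀ s, 0 ≤ s → 0 ≤ g s)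
    (hg_mono : ∀ s t, 0 ≤ s → s ≤ t → g t ≤ g s)
    (hg_rc : ∀ s, 0 ≤ s → ContinuousWithinAt g (Set.Ici s) s)
    (hiter : ∀ s t, 0 ≤ s → 0 ≤ t → t * g (s + t) ≤ B * g s ^ (1 + α))
    (s : ℕ → ℝ) (hs0 : s 0 = 0)
    (hsrec : ∀ j, s (j + 1) = s j + 2 * B * g (s j) ^ α) :
    (∀ j, g (s j) ≤ g 0 / 2 ^ j) ∧
      Tendsto (fun j => g (s j)) atTop (nhds 0) :=
  stmt1_general g α B hα hB hg_nonneg hiter s hs0 hsrec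
end

section
/- For 1 ≤ m ≤ n, the cone Γ_m = {λ ∈ ℝⁿ : σ₁(λ) > 0, …, σ_m(λ) > 0}, where σ_k denotes the k-th elementary symmetric polynomial, is a convex subset of ℝⁿ. -/
/-- The `k`-th elementary symmetric polynomial of `λ ∈ ℝⁿ`. -/
noncomputable def esymm (n k : ℕ) (lam : Fin n → ℝ) : ℝ :=
  ∑ s ∈ Finset.univ.powersetCard k, ∏ i ∈ s, lam i

/-- The Gårding cone `Γ_m = {λ ∈ ℝⁿ : σ₁(λ) > 0, …, σ_m(λ) > 0}`. -/
def GardingCone (n m : ℕ) : Set (Fin n → ℝ) :=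
  {lam | ∀ k, 1 ≤ k → k ≤ m → 0 < esymm n k lam}

/-!
For `x ∈ ℝⁿ`, `t ↦ σ_m(x + t𝟙)` is a constant multiple of the `(n - m)`-th derivative of
`∏ (x_i + t)`, so by Gauss–Lucas all its complex roots are real, and for `x ∈ Γ_m` they are
negative: `σ_m` is hyperbolic in the direction `𝟙`. Gårding's argument moves the direction into
`a ∈ Γ_m`. For `s > 0` the roots of `τ ↦ σ_m(θx + is𝟙 + τa)` never cross the real axis as `θ`
runs over `[0, 1]`, and at `θ = 0` they are `is/r` with `r < 0`, so they stay in the lower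
half-plane; letting `s → 0` and using conjugation, `τ ↦ σ_m(x + τa)` has only real roots.
Deforming `b ∈ Γ_m` to `𝟙` inside `Γ_m`, the roots of `τ ↦ σ_m(b + τa)` stay real and nonzero,
hence negative as they are for `b = 𝟙`; so `σ_m(b + ta) > 0` for `t ∈ [0, 1]`, in particular
`σ_m(a + b) > 0`. Applied to every `k ≤ m`, `Γ_m` is closed under addition.
-/

open Finset Polynomial Complex ComplexConjugate

theorem Finset.sum_powersetCard_succ_sum_erase {α M : Type*} [Fintype α] [DecidableEq α]
    [AddCommMonoid M] (k : ℕ) (F : Finset α → M) :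
    ∑ s ∈ univ.powersetCard (k + 1), ∑ i ∈ s, F (s.erase i) =
      ∑ t ∈ univ.powersetCard k, (Fintype.card α - k) • F t := by
  calc _ = ∑ t ∈ univ.powersetCard k, ∑ _i ∈ tᶜ, F t := by
        rw [sum_sigma', sum_sigma']
        refine sum_bij' (fun p _ => ⟨p.1.erase p.2, p.2⟩) (fun p _ => ⟨insert p.2 p.1, p.2⟩)
          ?_ ?_ ?_ ?_ fun _ _ => rfl
        · rintro ⟨s, i⟩ h
          simp only [mem_sigma, mem_powersetCard_univ] at h ⊢
          simp [card_erase_of_mem h.2, h.1]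
        · rintro ⟨t, i⟩ h
          simp only [mem_sigma, mem_powersetCard_univ, mem_compl] at h ⊢
          simp [card_insert_of_notMem h.2, h.1]
        · rintro ⟨s, i⟩ h
          simp [insert_erase (mem_sigma.mp h).2]
        · rintro ⟨t, i⟩ h
          simp [erase_insert (mem_compl.mp (mem_sigma.mp h).2)]
    _ = _ := sum_congr rfl fun t ht => by
        rw [sum_const, card_compl, mem_powersetCard_univ.mp ht]

theorem Polynomial.norm_leadingCoeff_mul_pow_le_norm_eval {K : Type*} [NormedField K]
    [IsAlgClosed K] (p : K[X]) {r : ℝ} (hr : 0 ≤ r) {τ : K} (h : ∀ z ∈ p.roots, r ≤ ‖τ - z‖) :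
    ‖p.leadingCoeff‖ * r ^ p.natDegree ≤ ‖p.eval τ‖ := by
  conv_rhs => rw [← C_leadingCoeff_mul_prod_multiset_X_sub_C
    (IsAlgClosed.card_roots_eq_natDegree (p := p))]
  rw [eval_mul, eval_C, eval_multiset_prod, norm_mul, ← IsAlgClosed.card_roots_eq_natDegree]
  gcongr
  refine le_of_le_of_eq ?_ (map_multiset_prod (normHom (α := K)) _).symm
  rw [Multiset.map_map, Multiset.map_map, ← Multiset.prod_replicate, ← Multiset.map_const']
  exact Multiset.prod_map_le_prod_map₀ _ _ (fun _ _ => hr) fun z hz => by simpa using h z hz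

section ElemSymm

variable {R S : Type*} [CommRing R] [CommRing S] {n : ℕ}

def elemSymm (k : ℕ) (w : Fin n → R) : R :=
  ∑ s ∈ univ.powersetCard k, ∏ i ∈ s, w i

theorem esymm_eq_elemSymm (k : ℕ) (x : Fin n → ℝ) : esymm n k x = elemSymm k x := rfl

theorem map_elemSymm (f : R →+* S) (k : ℕ) (w : Fin n → R) :
    f (elemSymm k w) = elemSymm k (f ∘ w) := by
  simp [elemSymm, map_sum, map_prod]

theorem elemSymm_smul (k : ℕ) (c : R) (w : Fin n → R) :
    elemSymm k (c • w) = c ^ k * elemSymm k w := by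
  simp only [elemSymm, mul_sum, Pi.smul_apply, smul_eq_mul, prod_mul_distrib, prod_const]
  exact sum_congr rfl fun s hs => by rw [(mem_powersetCard.mp hs).2]

theorem elemSymm_one (k : ℕ) : elemSymm k (1 : Fin n → R) = n.choose k := by
  simp [elemSymm, card_powersetCard]

theorem elemSymm_self (w : Fin n → R) : elemSymm n w = ∏ i, w i := by
  have h := powersetCard_self (univ : Finset (Fin n))
  rw [card_fin] at h
  simp [elemSymm, h]

@[fun_prop]
theorem continuous_elemSymm [TopologicalSpace R] [IsTopologicalRing R] (k : ℕ) :
    Continuous (elemSymm k : (Fin n → R) → R) := by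
  unfold elemSymm
  fun_prop

noncomputable def linePoly (k : ℕ) (u v : Fin n → R) : R[X] :=
  ∑ s ∈ univ.powersetCard k, ∏ i ∈ s, (C (v i) * X + C (u i))

theorem eval_linePoly (k : ℕ) (u v : Fin n → R) (τ : R) :
    (linePoly k u v).eval τ = elemSymm k (u + τ • v) := by
  simp only [linePoly, elemSymm, eval_finsetSum, eval_prod, eval_add, eval_mul, eval_C, eval_X,
    Pi.add_apply, Pi.smul_apply, smul_eq_mul]
  exact sum_congr rfl fun s _ => prod_congr rfl fun i _ => by ring

theorem natDegree_linePoly_le (k : ℕ) (u v : Fin n → R) : (linePoly k u v).natDegree ≤ k := by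
  refine natDegree_sum_le_of_forall_le _ _ fun s hs => (natDegree_prod_le _ _).trans ?_
  refine (sum_le_card_nsmul s (fun i => (C (v i) * X + C (u i)).natDegree) 1
    fun i _ => natDegree_linear_le).trans_eq ?_
  simp [(mem_powersetCard.mp hs).2]

theorem coeff_linePoly_self (k : ℕ) (u v : Fin n → R) :
    (linePoly k u v).coeff k = elemSymm k v := by
  simp only [linePoly, finsetSum_coeff, elemSymm]
  refine sum_congr rfl fun s hs => ?_
  rw [← (mem_powersetCard.mp hs).2, ← mul_one #s,
    coeff_prod_of_natDegree_le (n := 1) (h := fun i _ => natDegree_linear_le)]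
  simp

theorem derivative_linePoly_one (k : ℕ) (u : Fin n → R) :
    derivative (linePoly (k + 1) u 1) = ((n - k : ℕ) : R[X]) * linePoly k u 1 := by
  simp only [linePoly, derivative_sum, derivative_prod_finset, Pi.one_apply, map_one, one_mul,
    derivative_add, derivative_X, derivative_C, add_zero, mul_one]
  rw [sum_powersetCard_succ_sum_erase k fun t => ∏ j ∈ t, (X + C (u j)), Fintype.card_fin, mul_sum]
  simp [nsmul_eq_mul]

end ElemSymm

section RootsAlongLines

variable {n k : ℕ} {u v : Fin n → ℂ}

theorem natDegree_linePoly (hv : elemSymm k v ≠ 0) : (linePoly k u v).natDegree = k :=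
  natDegree_eq_of_le_of_coeff_ne_zero (natDegree_linePoly_le k u v)
    (by rwa [coeff_linePoly_self])

theorem leadingCoeff_linePoly (hv : elemSymm k v ≠ 0) :
    (linePoly k u v).leadingCoeff = elemSymm k v := by
  rw [leadingCoeff, natDegree_linePoly hv, coeff_linePoly_self]

theorem norm_elemSymm_mul_pow_le (hv : elemSymm k v ≠ 0) {r : ℝ} (hr : 0 ≤ r) {τ : ℂ}
    (h : ∀ z, elemSymm k (u + z • v) = 0 → r ≤ ‖τ - z‖) :
    ‖elemSymm k v‖ * r ^ k ≤ ‖elemSymm k (u + τ • v)‖ := by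
  have hne : linePoly k u v ≠ 0 := fun h0 => by
    simp [← coeff_linePoly_self k u v, h0] at hv
  simpa only [leadingCoeff_linePoly hv, natDegree_linePoly hv, eval_linePoly] using
    (linePoly k u v).norm_leadingCoeff_mul_pow_le_norm_eval hr fun z hz =>
      h z (by rw [← eval_linePoly]; exact (mem_roots hne).mp hz)

/-- `σ_k(u + τv) = τ^k σ_k(v + τ⁻¹u)`, and `σ_k` does not vanish near `v`. -/
theorem exists_norm_le_of_elemSymm_eq_zero (hv : elemSymm k v ≠ 0) (K : ℝ) :
    ∃ R, ∀ u : Fin n → ℂ, ‖u‖ ≤ K → ∀ τ : ℂ, elemSymm k (u + τ • v) = 0 → ‖τ‖ ≤ R := by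
  obtain ⟨δ, hδ, hne⟩ : ∃ δ > 0, ∀ w : Fin n → ℂ, ‖w‖ < δ → elemSymm k (v + w) ≠ 0 := by
    obtain ⟨δ, hδ, h⟩ := Metric.eventually_nhds_iff.mp
      ((continuous_elemSymm k).continuousAt.eventually_ne hv)
    exact ⟨δ, hδ, fun w hw => h (by simpa [dist_eq_norm] using hw)⟩
  refine ⟨K / δ, fun u hu τ hτ => le_of_not_gt fun hlt => ?_⟩
  have hKτ : K < ‖τ‖ * δ := (div_lt_iff₀ hδ).mp hlt
  have hτ0 : τ ≠ 0 := by
    rintro rfl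
    linarith [norm_nonneg u, norm_zero (E := ℂ) ▸ hKτ]
  rw [show u + τ • v = τ • (v + τ⁻¹ • u) by rw [smul_add, smul_inv_smul₀ hτ0, add_comm],
    elemSymm_smul] at hτ
  refine hne _ ?_ ((mul_eq_zero.mp hτ).resolve_left (pow_ne_zero _ hτ0))
  rw [norm_smul, norm_inv, inv_mul_lt_iff₀ (norm_pos_iff.mpr hτ0)]
  linarith

/-- A root `τ₀ ∈ O` at `x₀` makes `σ_k(u x + τ₀v)` small for `x` near `x₀`, which
`norm_elemSymm_mul_pow_le` forbids if all roots at `x` avoid a ball `B(τ₀, r) ⊆ O`. -/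
theorem isClosed_setOf_forall_elemSymm_ne_zero {X : Type*} [TopologicalSpace X]
    {u : X → Fin n → ℂ} (hu : Continuous u) (hv : elemSymm k v ≠ 0) {O : Set ℂ}
    (hO : IsOpen O) : IsClosed {x | ∀ τ ∈ O, elemSymm k (u x + τ • v) ≠ 0} := by
  refine isOpen_compl_iff.mp (isOpen_iff_mem_nhds.mpr fun x₀ hx₀ => ?_)
  simp only [Set.mem_compl_iff, Set.mem_ofPred_eq, not_forall, not_not] at hx₀
  obtain ⟨τ₀, hτ₀O, hτ₀⟩ := hx₀
  obtain ⟨r, hr, hball⟩ := Metric.isOpen_iff.mp hO τ₀ hτ₀O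
  have hcont : Continuous fun x => ‖elemSymm k (u x + τ₀ • v)‖ := by fun_prop
  have hsmall : ∀ᶠ x in nhds x₀, ‖elemSymm k (u x + τ₀ • v)‖ < ‖elemSymm k v‖ * r ^ k :=
    hcont.continuousAt.eventually_lt continuousAt_const
      (by rw [hτ₀, norm_zero]; exact mul_pos (norm_pos_iff.mpr hv) (pow_pos hr k))
  filter_upwards [hsmall] with x hx hno
  refine hx.not_ge (norm_elemSymm_mul_pow_le hv hr.le fun z hz => le_of_not_gt fun hlt => ?_)
  exact hno z (hball (by rwa [Metric.mem_ball, dist_comm, dist_eq_norm])) hz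

/-- The parameters at which no root lies in `O` form a closed set, and so do the others: the
roots are uniformly bounded, so limits of roots in `O` are roots in `closure O`, hence in `O`
because no root ever lies on the frontier. -/
theorem elemSymm_ne_zero_of_homotopy {X : Type*} [TopologicalSpace X] [CompactSpace X]
    [T2Space X] [PreconnectedSpace X] {u : X → Fin n → ℂ} (hu : Continuous u)
    (hv : elemSymm k v ≠ 0) {O : Set ℂ} (hO : IsOpen O)
    (hfr : ∀ x, ∀ τ ∈ frontier O, elemSymm k (u x + τ • v) ≠ 0) {x₀ x₁ : X}
    (h₀ : ∀ τ ∈ O, elemSymm k (u x₀ + τ • v) ≠ 0) :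
    ∀ τ ∈ O, elemSymm k (u x₁ + τ • v) ≠ 0 := by
  set A := {x | ∀ τ ∈ O, elemSymm k (u x + τ • v) ≠ 0}
  obtain ⟨K, hK⟩ := isCompact_univ.exists_bound_of_continuousOn hu.continuousOn
  obtain ⟨R, hR⟩ := exists_norm_le_of_elemSymm_eq_zero hv K
  set Z := {p : X × ℂ | p.2 ∈ closure O ∩ Metric.closedBall 0 R ∧
    elemSymm k (u p.1 + p.2 • v) = 0}
  have hZ : IsCompact Z := by
    refine (isCompact_univ.prod (isCompact_closedBall 0 R)).of_isClosed_subset ?_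
      fun p hp => ⟨trivial, hp.1.2⟩
    exact ((isClosed_closure.inter Metric.isClosed_closedBall).preimage continuous_snd).inter
      (isClosed_eq (by fun_prop) continuous_const)
  have hAc : Aᶜ = Prod.fst '' Z := by
    ext x
    simp only [A, Z, Set.mem_compl_iff, Set.mem_ofPred_eq, not_forall, not_not, Set.mem_image,
      Prod.exists, exists_and_right, exists_eq_right]
    constructor
    · rintro ⟨τ, hτO, hτ⟩
      exact ⟨τ, ⟨subset_closure hτO, mem_closedBall_zero_iff.mpr (hR _ (hK x trivial) τ hτ)⟩, hτ⟩
    · rintro ⟨τ, ⟨hτcl, -⟩, hτ⟩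
      refine ⟨τ, by_contra fun hτO => hfr x τ ?_ hτ, hτ⟩
      rw [hO.frontier_eq]
      exact ⟨hτcl, hτO⟩
  have hA : IsClopen A :=
    ⟨isClosed_setOf_forall_elemSymm_ne_zero hu hv hO,
      isClosed_compl_iff.mp (hAc ▸ (hZ.image continuous_fst).isClosed)⟩
  rcases isClopen_iff.mp hA with hA | hA
  · exact absurd (hA ▸ h₀ : x₀ ∈ (∅ : Set X)) id
  · exact (hA ▸ Set.mem_univ x₁ : x₁ ∈ A)

end RootsAlongLines

section GardingCone

variable {n m k : ℕ}

theorem elemSymm_ofReal (k : ℕ) (x : Fin n → ℝ) : elemSymm k (ofReal ∘ x) = esymm n k x := by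
  rw [esymm_eq_elemSymm, ← ofRealHom_eq_coe, map_elemSymm]
  rfl

theorem ofReal_comp_add_smul (x y : Fin n → ℝ) (t : ℝ) :
    ofReal ∘ (x + t • y) = ofReal ∘ x + (t : ℂ) • ofReal ∘ y := by
  ext i
  simp

theorem im_eq_zero_of_elemSymm_add_smul_one_eq_zero (hk : k ≤ n) (x : Fin n → ℝ) {z : ℂ}
    (hz : elemSymm k (ofReal ∘ x + z • 1) = 0) : z.im = 0 := by
  induction hk using Nat.decreasingInduction generalizing z with
  | self =>
    obtain ⟨i, -, hi⟩ := prod_eq_zero_iff.mp ((elemSymm_self _).symm.trans hz)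
    simpa using congrArg im (eq_neg_of_add_eq_zero_right hi)
  | of_succ k hk ih =>
    have hchoose : ∀ j ≤ n, elemSymm j (1 : Fin n → ℂ) ≠ 0 := fun j hj => by
      rw [elemSymm_one]
      exact_mod_cast (Nat.choose_pos hj).ne'
    set p := linePoly (k + 1) (ofReal ∘ x) 1
    have hp : 0 < p.degree := natDegree_pos_iff_degree_pos.mp <| by
      rw [natDegree_linePoly (hchoose _ hk)]
      omega
    have hzp : z ∈ (derivative p).rootSet ℂ := by
      rw [derivative_linePoly_one]
      refine mem_rootSet.mpr
        ⟨mul_ne_zero (by exact_mod_cast (by omega : n - k ≠ 0)) fun h0 => ?_, ?_⟩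
      · exact hchoose k hk.le (by rw [← coeff_linePoly_self k (ofReal ∘ x), h0, coeff_zero])
      · simp [coe_aeval_eq_eval, eval_linePoly, hz]
    have hreal : Convex ℝ {w : ℂ | w.im = 0} := convex_hyperplane imLm.isLinear 0
    refine convexHull_min (fun w hw => ?_) hreal
      (rootSet_derivative_subset_convexHull_rootSet hp hzp)
    have hw := (mem_rootSet.mp hw).2
    rw [coe_aeval_eq_eval, eval_linePoly] at hw
    exact ih hw

theorem esymm_zero (x : Fin n → ℝ) : esymm n 0 x = 1 := by
  simp [esymm]

theorem esymm_pos_of_mem_gardingCone {x : Fin n → ℝ} (hx : x ∈ GardingCone n m) :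
    0 < esymm n m x := by
  rcases Nat.eq_zero_or_pos m with rfl | hm
  · simp [esymm_zero]
  · exact hx m hm le_rfl

theorem le_of_esymm_pos {x : Fin n → ℝ} (hx : 0 < esymm n k x) : k ≤ n := by
  by_contra! h
  rw [esymm, powersetCard_eq_empty.mpr (by simpa using h), sum_empty] at hx
  exact hx.false

theorem gardingCone_anti (hkm : k ≤ m) : GardingCone n m ⊆ GardingCone n k :=
  fun _ hx j hj hjk => hx j hj (hjk.trans hkm)

theorem smul_mem_gardingCone {x : Fin n → ℝ} (hx : x ∈ GardingCone n m) {c : ℝ} (hc : 0 < c) :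
    c • x ∈ GardingCone n m := fun k hk hkm => by
  rw [esymm_eq_elemSymm, elemSymm_smul]
  exact mul_pos (pow_pos hc k) (hx k hk hkm)

theorem one_mem_gardingCone (hmn : m ≤ n) : (1 : Fin n → ℝ) ∈ GardingCone n m := fun k _ hkm => by
  rw [esymm_eq_elemSymm, elemSymm_one]
  exact_mod_cast Nat.choose_pos (hkm.trans hmn)

theorem add_smul_one_mem_gardingCone {x : Fin n → ℝ} (hx : x ∈ GardingCone n m) {t : ℝ}
    (ht : 0 ≤ t) : x + t • 1 ∈ GardingCone n m := by
  suffices ∀ k ≤ m, 0 < esymm n k (x + t • 1) from fun k _ hkm => this k hkm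
  intro k hkm
  induction k generalizing t with
  | zero => simp [esymm_zero]
  | succ k ih =>
    set p := linePoly (k + 1) x 1
    have hp : ∀ s, p.eval s = esymm n (k + 1) (x + s • 1) := eval_linePoly _ _ _
    have hmono : MonotoneOn p.eval (Set.Ici 0) := by
      refine monotoneOn_of_deriv_nonneg (convex_Ici 0) p.continuousOn p.differentiableOn ?_
      intro s hs
      rw [interior_Ici] at hs
      rw [Polynomial.deriv, derivative_linePoly_one, eval_mul, eval_natCast, eval_linePoly]
      exact mul_nonneg (Nat.cast_nonneg _) (ih (le_of_lt hs) (by omega)).le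
    calc 0 < esymm n (k + 1) x := hx (k + 1) (by omega) hkm
      _ = p.eval 0 := by simp [hp]
      _ ≤ p.eval t := hmono Set.self_mem_Ici ht ht
      _ = _ := hp t

theorem starConvex_one_gardingCone (hmn : m ≤ n) : StarConvex ℝ 1 (GardingCone n m) := by
  intro y hy a b ha hb hab
  rcases hb.eq_or_lt with rfl | hb
  · simpa [show a = 1 by linarith] using one_mem_gardingCone hmn
  · convert smul_mem_gardingCone (add_smul_one_mem_gardingCone hy (div_nonneg ha hb.le)) hb
      using 1
    rw [smul_add, smul_smul, mul_div_cancel₀ _ hb.ne', add_comm]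

theorem elemSymm_ofReal_ne_zero {a : Fin n → ℝ} (ha : a ∈ GardingCone n m) :
    elemSymm m (ofReal ∘ a) ≠ 0 := by
  rw [elemSymm_ofReal]
  exact_mod_cast (esymm_pos_of_mem_gardingCone ha).ne'

theorem exists_neg_of_elemSymm_add_smul_one_eq_zero (hmn : m ≤ n) {a : Fin n → ℝ}
    (ha : a ∈ GardingCone n m) {z : ℂ} (hz : elemSymm m (ofReal ∘ a + z • 1) = 0) :
    ∃ r : ℝ, r < 0 ∧ z = r := by
  obtain ⟨r, rfl⟩ : ∃ r : ℝ, z = r :=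
    ⟨z.re, ext rfl (by simpa using im_eq_zero_of_elemSymm_add_smul_one_eq_zero hmn a hz)⟩
  refine ⟨r, lt_of_not_ge fun hr => ?_, rfl⟩
  have hcast : ofReal ∘ (a + r • 1) = ofReal ∘ a + (r : ℂ) • 1 := by
    ext i
    simp
  exact (esymm_pos_of_mem_gardingCone (add_smul_one_mem_gardingCone ha hr)).ne'
    (by exact_mod_cast (elemSymm_ofReal m _).symm.trans (hcast ▸ hz))

theorem exists_neg_of_elemSymm_smul_one_add_smul_eq_zero (hmn : m ≤ n) {a : Fin n → ℝ}
    (ha : a ∈ GardingCone n m) {c τ : ℂ} (h : elemSymm m (c • 1 + τ • ofReal ∘ a) = 0) :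
    ∃ r : ℝ, r < 0 ∧ c = r * τ := by
  rcases eq_or_ne τ 0 with rfl | hτ
  · rw [zero_smul, add_zero, elemSymm_smul, elemSymm_one, mul_eq_zero, pow_eq_zero_iff'] at h
    rcases h with ⟨rfl, -⟩ | h
    · exact ⟨-1, by norm_num, by simp⟩
    · exact absurd h (by exact_mod_cast (Nat.choose_pos hmn).ne')
  · rw [show c • 1 + τ • ofReal ∘ a = τ • (ofReal ∘ a + (c / τ) • 1) by
      rw [smul_add, smul_smul, mul_div_cancel₀ _ hτ, add_comm], elemSymm_smul,
      mul_eq_zero, or_iff_right (pow_ne_zero _ hτ)] at h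
    obtain ⟨r, hr, hcr⟩ := exists_neg_of_elemSymm_add_smul_one_eq_zero hmn ha h
    exact ⟨r, hr, by rw [← hcr, div_mul_cancel₀ _ hτ]⟩

theorem elemSymm_add_I_smul_one_add_smul_ne_zero (hmn : m ≤ n) {a : Fin n → ℝ}
    (ha : a ∈ GardingCone n m) (x : Fin n → ℝ) {s : ℝ} (hs : 0 < s) {τ : ℂ} (hτ : 0 < τ.im) :
    elemSymm m (ofReal ∘ x + (s * I) • 1 + τ • ofReal ∘ a) ≠ 0 := by
  have key := elemSymm_ne_zero_of_homotopy (X := unitInterval)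
    (u := fun θ => ((θ : ℝ) : ℂ) • ofReal ∘ x + (s * I) • 1) (by fun_prop)
    (elemSymm_ofReal_ne_zero ha) (isOpen_lt continuous_const continuous_im)
    (x₀ := 0) (x₁ := 1) ?_ ?_ τ hτ
  · simpa using key
  · intro θ τ hτ hzero
    rw [frontier_setOfPred_lt_im, Set.mem_ofPred_eq] at hτ
    obtain ⟨t, rfl⟩ : ∃ t : ℝ, τ = t := ⟨τ.re, ext rfl (by simpa using hτ)⟩
    have hreal : ofReal ∘ ((θ : ℝ) • x + t • a) + (s * I) • 1 =
        ((θ : ℝ) : ℂ) • ofReal ∘ x + (s * I) • 1 + (t : ℂ) • ofReal ∘ a := by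
      ext i
      simp only [ofReal_comp_add, Pi.add_apply, Function.comp_apply, Pi.smul_apply, smul_eq_mul,
        ofReal_mul, Pi.one_apply, mul_one, Complex.coe_smul, real_smul]
      ring
    have := im_eq_zero_of_elemSymm_add_smul_one_eq_zero hmn _ (hreal ▸ hzero)
    simp [hs.ne'] at this
  · intro τ hτ hzero
    obtain ⟨r, hr, hsr⟩ := exists_neg_of_elemSymm_smul_one_add_smul_eq_zero hmn ha
      (by simpa using hzero)
    have := congrArg im hsr
    simp only [Set.mem_ofPred_eq] at hτ
    simp only [mul_im, ofReal_re, I_im, mul_one, ofReal_im, I_re, mul_zero, add_zero,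
      zero_mul] at this
    nlinarith

theorem elemSymm_add_smul_ne_zero_of_im_pos (hmn : m ≤ n) {a : Fin n → ℝ}
    (ha : a ∈ GardingCone n m) (x : Fin n → ℝ) {τ : ℂ} (hτ : 0 < τ.im) :
    elemSymm m (ofReal ∘ x + τ • ofReal ∘ a) ≠ 0 := by
  have hclosed := isClosed_setOf_forall_elemSymm_ne_zero
    (u := fun s : ℝ => ofReal ∘ x + (s * I) • 1) (by fun_prop) (elemSymm_ofReal_ne_zero ha)
    (O := {z : ℂ | 0 < z.im}) (isOpen_lt continuous_const continuous_im)
  have hpos : Set.Ioi 0 ⊆ {s : ℝ | ∀ τ ∈ {z : ℂ | 0 < z.im},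
      elemSymm m (ofReal ∘ x + (s * I) • 1 + τ • ofReal ∘ a) ≠ 0} :=
    fun s hs τ hτ => elemSymm_add_I_smul_one_add_smul_ne_zero hmn ha x hs hτ
  have h0 := hclosed.closure_subset_iff.mpr hpos (by rw [closure_Ioi]; exact Set.self_mem_Ici)
  simpa using h0 τ hτ

theorem im_eq_zero_of_elemSymm_add_smul_eq_zero (hmn : m ≤ n) {a : Fin n → ℝ}
    (ha : a ∈ GardingCone n m) (x : Fin n → ℝ) {τ : ℂ}
    (hτ : elemSymm m (ofReal ∘ x + τ • ofReal ∘ a) = 0) : τ.im = 0 := by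
  rcases lt_trichotomy τ.im 0 with hlt | heq | hgt
  · refine absurd ?_ (elemSymm_add_smul_ne_zero_of_im_pos hmn ha x (τ := conj τ) (by simpa))
    have hconj : conj ∘ (ofReal ∘ x + τ • ofReal ∘ a) = ofReal ∘ x + conj τ • ofReal ∘ a := by
      ext i
      simp
    rw [← hconj, ← map_elemSymm, hτ, map_zero]
  · exact heq
  · exact absurd hτ (elemSymm_add_smul_ne_zero_of_im_pos hmn ha x hgt)

theorem elemSymm_add_smul_ne_zero_of_re_pos (hmn : m ≤ n) {a b : Fin n → ℝ}
    (ha : a ∈ GardingCone n m) (hb : b ∈ GardingCone n m) {τ : ℂ} (hτ : 0 < τ.re) :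
    elemSymm m (ofReal ∘ b + τ • ofReal ∘ a) ≠ 0 := by
  set y : unitInterval → Fin n → ℝ := fun θ => (1 - (θ : ℝ)) • 1 + (θ : ℝ) • b
  have hy : ∀ θ, y θ ∈ GardingCone n m := fun θ =>
    starConvex_one_gardingCone hmn hb (sub_nonneg.mpr θ.2.2) θ.2.1 (sub_add_cancel 1 _)
  have key := elemSymm_ne_zero_of_homotopy (u := fun θ => ofReal ∘ y θ)
    (continuous_pi fun i => by simp only [y]; fun_prop) (elemSymm_ofReal_ne_zero ha)
    (isOpen_lt continuous_const continuous_re) (x₀ := 0) (x₁ := 1) ?_ ?_ τ hτ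
  · simpa [y] using key
  · intro θ τ hτ hzero
    rw [frontier_setOfPred_lt_re, Set.mem_ofPred_eq] at hτ
    have hτ0 : τ = 0 := ext hτ (im_eq_zero_of_elemSymm_add_smul_eq_zero hmn ha _ hzero)
    rw [hτ0, zero_smul, add_zero, elemSymm_ofReal] at hzero
    exact (esymm_pos_of_mem_gardingCone (hy θ)).ne' (by exact_mod_cast hzero)
  · intro τ hτ hzero
    obtain ⟨r, hr, h1⟩ := exists_neg_of_elemSymm_smul_one_add_smul_eq_zero hmn ha (c := 1)
      (by simpa [y] using hzero)
    have := congrArg re h1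
    simp only [Set.mem_ofPred_eq] at hτ
    simp only [one_re, mul_re, ofReal_re, ofReal_im, zero_mul, sub_zero] at this
    nlinarith

theorem esymm_add_pos (hmn : m ≤ n) {a b : Fin n → ℝ} (ha : a ∈ GardingCone n m)
    (hb : b ∈ GardingCone n m) : 0 < esymm n m (a + b) := by
  set f : ℝ → ℝ := fun t => esymm n m (b + t • a)
  have hf : Continuous f := by
    simp only [f, esymm_eq_elemSymm]
    fun_prop
  have hne : ∀ t ∈ Set.Icc (0 : ℝ) 1, f t ≠ 0 := by
    rintro t ⟨ht, -⟩
    rcases ht.eq_or_lt with rfl | ht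
    · simpa [f] using (esymm_pos_of_mem_gardingCone hb).ne'
    · have := elemSymm_add_smul_ne_zero_of_re_pos hmn ha hb (τ := t) (by simpa)
      rwa [← ofReal_comp_add_smul, elemSymm_ofReal, ofReal_ne_zero] at this
  refine lt_of_not_ge fun hle => ?_
  obtain ⟨t, ht, hft⟩ := intermediate_value_Icc' zero_le_one hf.continuousOn
    ⟨by simpa [f, add_comm] using hle, by simpa [f] using (esymm_pos_of_mem_gardingCone hb).le⟩
  exact hne t ht hft

theorem add_mem_gardingCone {a b : Fin n → ℝ} (ha : a ∈ GardingCone n m)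
    (hb : b ∈ GardingCone n m) : a + b ∈ GardingCone n m := fun k hk hkm =>
  esymm_add_pos (le_of_esymm_pos (ha k hk hkm)) (gardingCone_anti hkm ha)
    (gardingCone_anti hkm hb)

def gardingConvexCone (n m : ℕ) : ConvexCone ℝ (Fin n → ℝ) where
  carrier := GardingCone n m
  smul_mem' _ hc _ hx := smul_mem_gardingCone hx hc
  add_mem' _ ha _ hb := add_mem_gardingCone ha hb

end GardingCone

theorem stmt2_general (n m : ℕ) :
    Convex ℝ (GardingCone n m) :=
  (gardingConvexCone n m).convex

/-- For `1 ≤ m ≤ n`, the cone `Γ_m` is convex. -/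
theorem stmt2 (n m : ℕ) (h1 : 1 ≤ m) (hmn : m ≤ n) :
    Convex ℝ (GardingCone n m) :=
  stmt2_general n m
end

section
/- Let Ω ⊂ ℂⁿ be bounded open and let h be continuous on the closure of Ω, harmonic in Ω, with h restricted to ∂Ω equal to φ. Suppose there exist functions a (superharmonic on Ω, continuous on the closure) and b (subharmonic on Ω, continuous on the closure) with b ≤ h ≤ a on the closure of Ω, a = b = φ on ∂Ω, and both a, b ∈ Lip_τ of the closure of Ω. Then there is K₁ > 0 with |h(z) − h(ξ)| ≤ K₁|z−ξ|^τ for all z in the closure of Ω and ξ ∈ ∂Ω, and consequently h ∈ Lip_τ of the closure of Ω. -/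
open Real MeasureTheory Metric

/-- Subharmonicity on `s` (sub-mean-value definition). -/
def SubharmonicOn {d : ℕ} (f : EuclideanSpace ℝ (Fin d) → ℝ)
    (s : Set (EuclideanSpace ℝ (Fin d))) : Prop :=
  UpperSemicontinuousOn f s ∧
    ∀ x ∈ s, ∀ r > 0, closedBall x r ⊆ s → f x ≤ ⨍ y in closedBall x r, f y

/-- Superharmonicity on `s` (super-mean-value definition). -/
def SuperharmonicOn {d : ℕ} (f : EuclideanSpace ℝ (Fin d) → ℝ)
    (s : Set (EuclideanSpace ℝ (Fin d))) : Prop :=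
  LowerSemicontinuousOn f s ∧
    ∀ x ∈ s, ∀ r > 0, closedBall x r ⊆ s → (⨍ y in closedBall x r, f y) ≤ f x

/-- Harmonicity on `s` (mean-value definition). -/
def HarmonicOn {d : ℕ} (f : EuclideanSpace ℝ (Fin d) → ℝ)
    (s : Set (EuclideanSpace ℝ (Fin d))) : Prop :=
  ContinuousOn f s ∧
    ∀ x ∈ s, ∀ r > 0, closedBall x r ⊆ s → f x = ⨍ y in closedBall x r, f y

/-! On the boundary the estimate is immediate from the barriers: `b ≤ h ≤ a` and `a = b = h` on
`∂Ω`, so `h(z) - h(ξ)` is caught between the Hölder increments of `b` and `a`. For the interior,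
fix a translation vector `t`: the difference `h(· + t) - h` is harmonic on `Ω ∩ (Ω - t)`, and on
the boundary of that set one of the two points lies on `∂Ω`, so the boundary estimate bounds it
by `K‖t‖^τ`. The maximum principle carries this bound inside. The maximum principle itself only
uses the sub-mean-value inequality: the set where a continuous function attains its maximum over
`closure U` is open by the mean-value inequality, closed by continuity, and misses `∂U`, so it
would have to be the whole (unbounded) space. -/

open Set

theorem abs_sub_le_of_squeeze {lo hi x lo' hi' x' c : ℝ} (hlo : lo ≤ x) (hhi : x ≤ hi)
    (hlo' : lo' = x') (hhi' : hi' = x') (hlo_c : |lo - lo'| ≤ c) (hhi_c : |hi - hi'| ≤ c) :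
    |x - x'| ≤ c := by
  subst hlo' hhi'
  rw [abs_le] at *
  constructor <;> linarith

theorem setAverage_closedBall_add_right {G : Type*} [NormedAddCommGroup G] [MeasurableSpace G]
    [BorelSpace G] {μ : Measure G} [μ.IsAddRightInvariant] (f : G → ℝ) (x t : G) (r : ℝ) :
    ⨍ y in closedBall (x + t) r, f y ∂μ = ⨍ y in closedBall x r, f (y + t) ∂μ := by
  have hμ := measurePreserving_add_right μ t
  have hpre : (· + t) ⁻¹' closedBall (x + t) r = closedBall x r := by simp
  rw [setAverage_eq, setAverage_eq, ← hpre,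
    hμ.measureReal_preimage measurableSet_closedBall.nullMeasurableSet,
    hμ.setIntegral_preimage_emb (measurableEmbedding_addRight t)]

section MeanValue

variable {E : Type*} [NormedAddCommGroup E] [NormedSpace ℝ E] [MeasurableSpace E] [BorelSpace E]
  [FiniteDimensional ℝ E] {μ : Measure E} [μ.IsAddHaarMeasure]

theorem eqOn_ball_of_forall_le_of_le_setAverage {f : E → ℝ} {x : E} {r m : ℝ}
    (hf : ContinuousOn f (closedBall x r)) (hle : ∀ y ∈ closedBall x r, f y ≤ m)
    (havg : m ≤ ⨍ y in closedBall x r, f y ∂μ) : EqOn f (fun _ ↦ m) (ball x r) := by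
  rcases le_or_gt r 0 with hr | hr
  · simp [ball_eq_empty.2 hr]
  have hfi : IntegrableOn f (closedBall x r) μ :=
    hf.integrableOn_compact (isCompact_closedBall x r)
  have hvol : 0 < μ.real (closedBall x r) :=
    ENNReal.toReal_pos (measure_closedBall_pos μ x hr).ne' measure_closedBall_lt_top.ne
  have hm : IntegrableOn (fun _ ↦ m) (closedBall x r) μ :=
    integrableOn_const measure_closedBall_lt_top.ne
  have hgap : ∫ y in closedBall x r, (m - f y) ∂μ = 0 := by
    refine le_antisymm ?_
      (setIntegral_nonneg measurableSet_closedBall fun y hy ↦ sub_nonneg.2 (hle y hy))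
    rw [setAverage_eq, smul_eq_mul, ← div_eq_inv_mul, le_div_iff₀ hvol] at havg
    rw [integral_sub hm hfi, setIntegral_const, smul_eq_mul]
    linarith
  have hae : (fun y ↦ m - f y) =ᵐ[μ.restrict (closedBall x r)] 0 :=
    (integral_eq_zero_iff_of_nonneg_ae ((ae_restrict_iff' measurableSet_closedBall).2
      (ae_of_all _ fun y hy ↦ sub_nonneg.2 (hle y hy))) (hm.sub hfi)).1 hgap
  refine Measure.eqOn_open_of_ae_eq (μ := μ) ?_ isOpen_ball (hf.mono ball_subset_closedBall)
    continuousOn_const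
  exact ae_restrict_of_ae_restrict_of_subset ball_subset_closedBall
    (hae.mono fun y hy ↦ by simp only [Pi.zero_apply, sub_eq_zero] at hy; exact hy.symm)

theorem le_of_forall_frontier_le_of_le_setAverage [Nontrivial E] {U : Set E} {u : E → ℝ}
    {M : ℝ}
    (hUo : IsOpen U) (hUb : Bornology.IsBounded U) (huc : ContinuousOn u (closure U))
    (hmv : ∀ x ∈ U, ∀ r > 0, closedBall x r ⊆ U → u x ≤ ⨍ y in closedBall x r, u y ∂μ)
    (hM : ∀ x ∈ frontier U, u x ≤ M) : ∀ x ∈ closure U, u x ≤ M := by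
  by_contra! ⟨x₀, hx₀, hlt⟩
  obtain ⟨x₁, hx₁, hmax⟩ := hUb.isCompact_closure.exists_isMaxOn ⟨x₀, hx₀⟩ huc
  set S := closure U ∩ u ⁻¹' {u x₁}
  have hSU : S ⊆ U := fun x ⟨hxc, hx⟩ ↦ by
    by_contra hxU
    have := hM x ⟨hxc, by rwa [hUo.interior_eq]⟩
    have : u x₀ ≤ u x₁ := hmax hx₀
    simp only [mem_preimage, mem_singleton_iff] at hx
    linarith
  have hSo : IsOpen S := by
    refine Metric.isOpen_iff.2 fun x hx ↦ ?_
    obtain ⟨ε, hε, hεU⟩ := Metric.isOpen_iff.1 hUo x (hSU hx)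
    have hB : closedBall x (ε / 2) ⊆ U :=
      (closedBall_subset_ball (half_lt_self hε)).trans hεU
    have hconst := eqOn_ball_of_forall_le_of_le_setAverage (huc.mono (hB.trans subset_closure))
      (fun y hy ↦ hmax (subset_closure (hB hy)))
      (hx.2 ▸ hmv x (hSU hx) _ (half_pos hε) hB)
    exact ⟨ε / 2, half_pos hε, fun y hy ↦
      ⟨subset_closure (hB (ball_subset_closedBall hy)), hconst hy⟩⟩
  have hSuniv : S = univ :=
    IsClopen.eq_univ ⟨huc.preimage_isClosed_of_isClosed isClosed_closure isClosed_singleton, hSo⟩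
      ⟨x₁, hx₁, rfl⟩
  exact NormedSpace.unbounded_univ ℝ E (hSuniv ▸ hUb.closure.subset inter_subset_left)

end MeanValue

section Harmonic

variable {d : ℕ} {f g h : EuclideanSpace ℝ (Fin d) → ℝ} {s t Ω : Set (EuclideanSpace ℝ (Fin d))}
  {ω : ℝ → ℝ}

theorem HarmonicOn.mono (hf : HarmonicOn f s) (hts : t ⊆ s) : HarmonicOn f t :=
  ⟨hf.1.mono hts, fun x hx r hr hB ↦ hf.2 x (hts hx) r hr (hB.trans hts)⟩

theorem HarmonicOn.comp_add_right (hf : HarmonicOn f s) (v : EuclideanSpace ℝ (Fin d)) :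
    HarmonicOn (fun x ↦ f (x + v)) ((· + v) ⁻¹' s) := by
  refine ⟨hf.1.comp (continuous_add_const v).continuousOn (mapsTo_preimage _ _),
    fun x hx r hr hB ↦ ?_⟩
  have hB' : closedBall (x + v) r ⊆ s := fun y hy ↦ by
    simpa using hB (show y - v ∈ closedBall x r by simpa [dist_sub_eq_dist_add_right] using hy)
  show f (x + v) = ⨍ y in closedBall x r, f (y + v)
  rw [hf.2 _ hx r hr hB', setAverage_closedBall_add_right]

theorem HarmonicOn.sub (hf : HarmonicOn f s) (hg : HarmonicOn g s) :
    HarmonicOn (fun x ↦ f x - g x) s := by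
  refine ⟨hf.1.sub hg.1, fun x hx r hr hB ↦ ?_⟩
  have hint {k : EuclideanSpace ℝ (Fin d) → ℝ} (hk : HarmonicOn k s) :
      IntegrableOn k (closedBall x r) :=
    (hk.1.mono hB).integrableOn_compact (isCompact_closedBall x r)
  rw [setAverage_eq, integral_sub (hint hf) (hint hg), smul_sub, ← setAverage_eq,
    ← setAverage_eq, ← hf.2 x hx r hr hB, ← hg.2 x hx r hr hB]

theorem HarmonicOn.sub_le_of_forall_frontier (hh : HarmonicOn h Ω) (hΩo : IsOpen Ω)
    (hΩb : Bornology.IsBounded Ω) (hhc : ContinuousOn h (closure Ω))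
    (hbd : ∀ z ∈ closure Ω, ∀ ξ ∈ frontier Ω, |h z - h ξ| ≤ ω ‖z - ξ‖) (hω : 0 ≤ ω 0)
    {z w : EuclideanSpace ℝ (Fin d)} (hz : z ∈ Ω) (hw : w ∈ Ω) : h w - h z ≤ ω ‖w - z‖ := by
  rcases eq_or_ne w z with rfl | hne
  · simpa using hω
  have : Nontrivial (EuclideanSpace ℝ (Fin d)) := ⟨⟨w, z, hne⟩⟩
  set T := Homeomorph.addRight (w - z)
  set U := Ω ∩ T ⁻¹' Ω
  have hclU : closure U ⊆ closure Ω ∩ T ⁻¹' closure Ω := by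
    rw [T.preimage_closure]; exact closure_inter_subset_inter_closure _ _
  have hfr : ∀ x ∈ frontier U, h (x + (w - z)) - h x ≤ ω ‖w - z‖ := by
    intro x hx
    rcases frontier_inter_subset Ω _ hx with ⟨hxΩ, hxT⟩ | ⟨hxΩ, hxT⟩
    · rw [← T.preimage_closure] at hxT
      simpa [T] using (le_abs_self _).trans (hbd _ hxT x hxΩ)
    · rw [← T.preimage_frontier] at hxT
      have hbdx := hbd x hxΩ _ hxT
      rw [abs_sub_comm, norm_sub_rev] at hbdx
      simpa [T] using (le_abs_self _).trans hbdx
  have hu : HarmonicOn (fun x ↦ h (x + (w - z)) - h x) U :=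
    ((hh.comp_add_right (w - z)).mono inter_subset_right).sub (hh.mono inter_subset_left)
  have huc : ContinuousOn (fun x ↦ h (x + (w - z)) - h x) (closure U) :=
    ((hhc.comp T.continuous.continuousOn fun _ hx ↦ hx).mono
      (hclU.trans inter_subset_right)).sub (hhc.mono (hclU.trans inter_subset_left))
  have hzU : z ∈ U := ⟨hz, by simpa [T] using hw⟩
  simpa using le_of_forall_frontier_le_of_le_setAverage (hΩo.inter (hΩo.preimage T.continuous))
    (hΩb.subset inter_subset_left) huc (fun x hx r hr hB ↦ (hu.2 x hx r hr hB).le) hfr z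
    (subset_closure hzU)

theorem HarmonicOn.abs_sub_le_of_forall_frontier (hh : HarmonicOn h Ω) (hΩo : IsOpen Ω)
    (hΩb : Bornology.IsBounded Ω) (hhc : ContinuousOn h (closure Ω))
    (hbd : ∀ z ∈ closure Ω, ∀ ξ ∈ frontier Ω, |h z - h ξ| ≤ ω ‖z - ξ‖) (hω : 0 ≤ ω 0) :
    ∀ z ∈ closure Ω, ∀ w ∈ closure Ω, |h z - h w| ≤ ω ‖z - w‖ := by
  have hfr {x} (hx : x ∈ closure Ω) (hxΩ : x ∉ Ω) : x ∈ frontier Ω :=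
    ⟨hx, by rwa [hΩo.interior_eq]⟩
  intro z hz w hw
  by_cases hzΩ : z ∈ Ω
  · by_cases hwΩ : w ∈ Ω
    · exact abs_sub_le_iff.2 ⟨hh.sub_le_of_forall_frontier hΩo hΩb hhc hbd hω hwΩ hzΩ,
        norm_sub_rev z w ▸ hh.sub_le_of_forall_frontier hΩo hΩb hhc hbd hω hzΩ hwΩ⟩
    · exact hbd z hz w (hfr hw hwΩ)
  · simpa [abs_sub_comm, norm_sub_rev] using hbd w hw z (hfr hz hzΩ)

end Harmonic

theorem stmt5_general (n : ℕ) (Ω : Set (EuclideanSpace ℝ (Fin (2 * n))))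
    (hΩo : IsOpen Ω) (hΩb : Bornology.IsBounded Ω)
    (τ : ℝ)
    (h φ a b : EuclideanSpace ℝ (Fin (2 * n)) → ℝ)
    (hhc : ContinuousOn h (closure Ω)) (hharm : HarmonicOn h Ω)
    (hhφ : ∀ ξ ∈ frontier Ω, h ξ = φ ξ)
    (hsqueeze : ∀ z ∈ closure Ω, b z ≤ h z ∧ h z ≤ a z)
    (haφ : ∀ ξ ∈ frontier Ω, a ξ = φ ξ) (hbφ : ∀ ξ ∈ frontier Ω, b ξ = φ ξ)
    (Ca : ℝ) (ha_hold : ∀ z ∈ closure Ω, ∀ w ∈ closure Ω, |a z - a w| ≤ Ca * ‖z - w‖ ^ τ)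
    (Cb : ℝ) (hb_hold : ∀ z ∈ closure Ω, ∀ w ∈ closure Ω, |b z - b w| ≤ Cb * ‖z - w‖ ^ τ) :
    ∃ K₁ > (0 : ℝ),
      (∀ z ∈ closure Ω, ∀ ξ ∈ frontier Ω, |h z - h ξ| ≤ K₁ * ‖z - ξ‖ ^ τ) ∧
        ∀ z ∈ closure Ω, ∀ w ∈ closure Ω, |h z - h w| ≤ K₁ * ‖z - w‖ ^ τ := by
  set K := max Ca (max Cb 1)
  have hK : 0 < K := lt_max_of_lt_right (lt_max_of_lt_right one_pos)
  have hbd : ∀ z ∈ closure Ω, ∀ ξ ∈ frontier Ω, |h z - h ξ| ≤ K * ‖z - ξ‖ ^ τ := by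
    intro z hz ξ hξ
    have hξc := frontier_subset_closure hξ
    have hpow := rpow_nonneg (norm_nonneg (z - ξ)) τ
    refine abs_sub_le_of_squeeze (hsqueeze z hz).1 (hsqueeze z hz).2
      ((hbφ ξ hξ).trans (hhφ ξ hξ).symm)
      ((haφ ξ hξ).trans (hhφ ξ hξ).symm) ?_ ?_
    · exact (hb_hold z hz ξ hξc).trans
        (mul_le_mul_of_nonneg_right ((le_max_left _ _).trans (le_max_right _ _)) hpow)
    · exact (ha_hold z hz ξ hξc).trans (mul_le_mul_of_nonneg_right (le_max_left _ _) hpow)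
  exact ⟨K, hK, hbd, hharm.abs_sub_le_of_forall_frontier (ω := fun s ↦ K * s ^ τ) hΩo hΩb hhc
    hbd (mul_nonneg hK.le (rpow_nonneg le_rfl τ))⟩

/-- If `h` is harmonic in a bounded open `Ω ⊆ ℂⁿ ≅ ℝ^{2n}`, continuous up to the boundary
with boundary values `φ`, and is squeezed between a subharmonic barrier `b` and a
superharmonic barrier `a`, both `τ`-Hölder on the closure of `Ω` and equal to `φ` on
`∂Ω`, then `|h(z) − h(ξ)| ≤ K₁ |z − ξ|^τ` for `z` in the closure and `ξ ∈ ∂Ω`, and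
consequently `h` is `τ`-Hölder on the closure of `Ω`. -/
theorem stmt5 (n : ℕ) (Ω : Set (EuclideanSpace ℝ (Fin (2 * n))))
    (hΩo : IsOpen Ω) (hΩb : Bornology.IsBounded Ω)
    (τ : ℝ) (hτ0 : 0 < τ) (hτ1 : τ < 1)
    (h φ a b : EuclideanSpace ℝ (Fin (2 * n)) → ℝ)
    (hhc : ContinuousOn h (closure Ω)) (hharm : HarmonicOn h Ω)
    (hhφ : ∀ ξ ∈ frontier Ω, h ξ = φ ξ)
    (hac : ContinuousOn a (closure Ω)) (hsup : SuperharmonicOn a Ω)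
    (hbc : ContinuousOn b (closure Ω)) (hsub : SubharmonicOn b Ω)
    (hsqueeze : ∀ z ∈ closure Ω, b z ≤ h z ∧ h z ≤ a z)
    (haφ : ∀ ξ ∈ frontier Ω, a ξ = φ ξ) (hbφ : ∀ ξ ∈ frontier Ω, b ξ = φ ξ)
    (Ca : ℝ) (ha_hold : ∀ z ∈ closure Ω, ∀ w ∈ closure Ω, |a z - a w| ≤ Ca * ‖z - w‖ ^ τ)
    (Cb : ℝ) (hb_hold : ∀ z ∈ closure Ω, ∀ w ∈ closure Ω, |b z - b w| ≤ Cb * ‖z - w‖ ^ τ) :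
    ∃ K₁ > (0 : ℝ),
      (∀ z ∈ closure Ω, ∀ ξ ∈ frontier Ω, |h z - h ξ| ≤ K₁ * ‖z - ξ‖ ^ τ) ∧
        ∀ z ∈ closure Ω, ∀ w ∈ closure Ω, |h z - h w| ≤ K₁ * ‖z - w‖ ^ τ :=
  stmt5_general n Ω hΩo hΩb τ h φ a b hhc hharm hhφ hsqueeze haφ hbφ Ca ha_hold Cb hb_hold
end
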